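/- arXiv:2312.04272 — 2 statements merged into one kernel-verified Lean document; each statement's English description precedes it below -/
import Mathlib

section
/- Generalized sector condition (vector case): let ū ∈ ℝⁿ with ūⱼ > 0 for all j, let W ∈ ℝⁿˣⁿ be diagonal with positive diagonal entries, and let u, v ∈ ℝⁿ with dz(v) = 0 (componentwise). Then dz(u)ᵀ W (u - dz(u) + v) ≥ 0, where dz is the componentwise dead-zone with bounds ū. -/
noncomputable def satv {n : ℕ} (ub u : Fin n → ℝ) : Fin n → ℝ :=
  fun j => max (-ub j) (min (ub j) (u j))
noncomputable def dzv {n : ℕ} (ub u : Fin n → ℝ) : Fin n → ℝ :=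
  fun j => u j - satv ub u j

theorem generalized_sector_vector {n : ℕ} (ub : Fin n → ℝ)
    (hub : ∀ j, 0 < ub j) (d : Fin n → ℝ) (hd : ∀ j, 0 < d j)
    (W : Matrix (Fin n) (Fin n) ℝ) (hW : W = Matrix.diagonal d)
    (u v : Fin n → ℝ) (hv : dzv ub v = 0) :
    0 ≤ dotProduct (dzv ub u) (W.mulVec (u - dzv ub u + v)) := by
  subst hW
  rw [dotProduct]
  apply Finset.sum_nonneg
  intro j _
  have hvj : dzv ub v j = 0 := by rw [hv]; rfl
  simp only [Matrix.mulVec_diagonal, Pi.add_apply, Pi.sub_apply]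
  have hvle : -ub j ≤ v j ∧ v j ≤ ub j := by
    simp only [dzv, satv, sub_eq_zero] at hvj
    constructor
    · rw [hvj]; exact le_max_left _ _
    · rw [hvj]
      rcases le_total (v j) (ub j) with h | h
      · simp [min_eq_right h, max_le_iff, h, neg_le_iff_add_nonneg]
        nlinarith [hub j]
      · simp [min_eq_left h, h, le_max_iff, (hub j).le]
  have key : 0 ≤ dzv ub u j * (u j - dzv ub u j + v j) := by
    simp only [dzv, sub_sub_cancel]
    set s := satv ub u j with hs
    have hsdef : s = max (-ub j) (min (ub j) (u j)) := rfl
    rcases lt_or_ge (u j) (-ub j) with h | h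
    · have : s = -ub j := by
        rw [hsdef, max_eq_left]
        exact le_trans (min_le_right _ _) h.le
      rw [this]
      have : u j - -ub j ≤ 0 := by linarith
      have h2 : -ub j + v j ≤ 0 := by linarith [hvle.2]
      nlinarith
    · rcases le_total (u j) (ub j) with h2 | h2
      · have : s = u j := by
          rw [hsdef, min_eq_right h2, max_eq_right h]
        simp [this]
      · have : s = ub j := by
          rw [hsdef, min_eq_left h2, max_eq_right]
          linarith [hub j]
        rw [this]
        have h3 : 0 ≤ u j - ub j := by linarith
        have h4 : 0 ≤ ub j + v j := by linarith [hvle.1]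
        positivity
  nlinarith [key, (hd j).le]
end

section
/- If the block matrix [[Q, Nᵀ],[N, ū²/s²]] is positive definite with Q symmetric positive definite, then with H = N Q⁻¹ and P = Q⁻¹, every x satisfying xᵀ P x ≤ s² satisfies |H x| ≤ ū. -/
open Matrix

theorem saturation_LMI_implies_bound {n : ℕ}
    (Q : Matrix (Fin n) (Fin n) ℝ) (hQ : Q.PosDef)
    (N : Matrix (Fin 1) (Fin n) ℝ) (ub s : ℝ) (hub : 0 < ub) (hs : 0 < s)
    (hLMI : (Matrix.fromBlocks Q N.transpose N
        (Matrix.of fun _ _ => ub ^ 2 / s ^ 2)).PosDef) :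
    ∀ x : Fin n → ℝ, dotProduct x ((Q⁻¹).mulVec x) ≤ s ^ 2 →
      |((N * Q⁻¹).mulVec x) 0| ≤ ub := by
  intro x hx
  have hP : (Q⁻¹).PosDef := hQ.inv
  have hinv : Invertible Q := hQ.isUnit.invertible
  set P := Q⁻¹ with hPdef
  have hTH : Nᵀᴴ = N := by ext i j; simp [Matrix.conjTranspose_apply]
  -- Schur complement
  have hSchur : ((Matrix.of fun _ _ => ub ^ 2 / s ^ 2 : Matrix (Fin 1) (Fin 1) ℝ)
      - N * P * Nᵀ).PosSemidef := by
    have h0 : ((Matrix.of fun _ _ => ub ^ 2 / s ^ 2 : Matrix (Fin 1) (Fin 1) ℝ)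
        - Nᵀᴴ * P * Nᵀ).PosSemidef := by
      rw [← Matrix.PosDef.fromBlocks₁₁ _ _ hQ, hTH]
      exact hLMI.posSemidef
    rwa [hTH] at h0
  set w : Fin n → ℝ := fun j => N 0 j with hw
  have hNPN : (N * P * Nᵀ) 0 0 = w ⬝ᵥ P *ᵥ w := by
    simp [Matrix.mul_apply, dotProduct, Matrix.mulVec, Finset.sum_mul, Finset.mul_sum, hw]
    rw [Finset.sum_comm]
    congr 1; ext j; congr 1; ext k; ring
  have hwPw : w ⬝ᵥ P *ᵥ w ≤ ub ^ 2 / s ^ 2 := by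
    have hd := hSchur.dotProduct_mulVec_nonneg (fun _ => (1:ℝ))
    have hv : (star (fun _ => (1:ℝ))) ⬝ᵥ (((Matrix.of fun _ _ => ub ^ 2 / s ^ 2 :
        Matrix (Fin 1) (Fin 1) ℝ) - N * P * Nᵀ) *ᵥ fun _ => (1:ℝ))
        = ub ^ 2 / s ^ 2 - (N * P * Nᵀ) 0 0 := by
      simp [dotProduct, Matrix.mulVec, Fin.sum_univ_one, Matrix.sub_apply]
    rw [hv] at hd
    rw [← hNPN]
    linarith
  have hHx : ((N * P).mulVec x) 0 = w ⬝ᵥ P *ᵥ x := by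
    simp [Matrix.mul_apply, dotProduct, Matrix.mulVec, Finset.sum_mul, Finset.mul_sum, hw]
    rw [Finset.sum_comm]
    congr 1; ext j; congr 1; ext k; ring
  have hPT : Pᵀ = P := by
    ext i j
    have := congrFun (congrFun hP.isHermitian.eq i) j
    simpa using this
  have hsym : x ⬝ᵥ P *ᵥ w = w ⬝ᵥ P *ᵥ x := by
    rw [Matrix.dotProduct_mulVec, ← Matrix.mulVec_transpose, hPT, dotProduct_comm]
  -- Cauchy–Schwarz via discriminant
  have hquad : ∀ t : ℝ, 0 ≤ (w ⬝ᵥ P *ᵥ w) * (t * t) + (2 * (w ⬝ᵥ P *ᵥ x)) * t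
      + (x ⬝ᵥ P *ᵥ x) := by
    intro t
    have h0 := hP.posSemidef.dotProduct_mulVec_nonneg (x + t • w)
    have hexp : star (x + t • w) ⬝ᵥ P *ᵥ (x + t • w)
        = (w ⬝ᵥ P *ᵥ w) * (t * t) + (2 * (w ⬝ᵥ P *ᵥ x)) * t + (x ⬝ᵥ P *ᵥ x) := by
      simp [Matrix.mulVec_add, Matrix.mulVec_smul, dotProduct_add,
        add_dotProduct, smul_dotProduct, dotProduct_smul,
        smul_eq_mul, hsym]
      ring
    rw [hexp] at h0
    exact h0
  have hdisc := discrim_le_zero hquad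
  rw [discrim] at hdisc
  have hxx : 0 ≤ x ⬝ᵥ P *ᵥ x := hP.posSemidef.dotProduct_mulVec_nonneg x
  have hww : 0 ≤ w ⬝ᵥ P *ᵥ w := hP.posSemidef.dotProduct_mulVec_nonneg w
  have hsq : (w ⬝ᵥ P *ᵥ x) ^ 2 ≤ ub ^ 2 := by
    have h1 : (w ⬝ᵥ P *ᵥ x) ^ 2 ≤ (w ⬝ᵥ P *ᵥ w) * (x ⬝ᵥ P *ᵥ x) := by nlinarith
    have h2 : (w ⬝ᵥ P *ᵥ w) * (x ⬝ᵥ P *ᵥ x) ≤ (ub ^ 2 / s ^ 2) * s ^ 2 := by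
      apply mul_le_mul hwPw hx hxx
      positivity
    have h3 : (ub ^ 2 / s ^ 2) * s ^ 2 = ub ^ 2 := by field_simp
    linarith
  rw [hHx, abs_le]
  constructor <;> nlinarith [hsq, hub]
end
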